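/- arXiv:2004.03729 — 3 statements merged into one kernel-verified Lean document; each statement's English description precedes it below -/
import Mathlib

section
/- Let α ∈ (0,1] and let f : [0,∞) → ℝ be continuous. Then for every x > 0, the conformable fractional derivative of the conformable fractional integral of f recovers f; that is, x^{1−α} · (d/dx)( ∫₀^x t^{α−1} f(t) dt ) = f(x). -/
open Real MeasureTheory Set

/-- **Conformable derivative of the conformable integral.**
If `α ∈ (0,1]` and `f : [0,∞) → ℝ` is continuous, then for every `x > 0`,
`x^(1-α) * d/dx (∫ t in 0..x, t^(α-1) f t) = f x`, i.e. `Dᵅ (Iₐ f) = f`. -/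
theorem confDeriv_confInt_eq_self
    (α : ℝ) (hα : α ∈ Set.Ioc (0 : ℝ) 1)
    (f : ℝ → ℝ) (hf : ContinuousOn f (Set.Ici 0)) :
    ∀ x : ℝ, 0 < x →
      x ^ (1 - α) * deriv (fun y : ℝ => ∫ t in (0:ℝ)..y, t ^ (α - 1) * f t) x = f x := by
  intro x hx
  set g : ℝ → ℝ := fun t => t ^ (α - 1) * f t with hg
  have hint : IntervalIntegrable g volume 0 x := by
    apply IntervalIntegrable.mul_continuousOn
    · exact intervalIntegral.intervalIntegrable_rpow' (by linarith [hα.1])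
    · apply hf.mono
      rw [Set.uIcc_of_le hx.le]
      exact fun t ht => ht.1
  have hgc : ∀ t : ℝ, 0 < t → ContinuousAt g t := by
    intro t ht
    exact (Real.continuousAt_rpow_const t (α - 1) (Or.inl ht.ne')).mul
      ((hf t ht.le).continuousAt (Ici_mem_nhds ht))
  have hmeas : StronglyMeasurableAtFilter g (nhds x) volume := by
    refine ContinuousOn.stronglyMeasurableAtFilter isOpen_Ioi ?_ x hx
    exact fun t ht => (hgc t ht).continuousWithinAt
  have hder : HasDerivAt (fun y : ℝ => ∫ t in (0:ℝ)..y, g t) (g x) x :=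
    intervalIntegral.integral_hasDerivAt_right hint hmeas (hgc x hx)
  rw [hder.deriv]
  have : x ^ (1 - α) * (x ^ (α - 1) * f x) = (x ^ (1 - α) * x ^ (α - 1)) * f x := by ring
  rw [hg, this, ← Real.rpow_add hx]
  norm_num
end

section
/- Let α ∈ (0,1], let p : [0,π] → ℝ be continuously differentiable, set Q(x) = ∫₀^x t^{α−1} p(t) dt, and let λ ∈ ℝ satisfy λ ≠ p(x) for all x ∈ [0,π]. Then each of the functions y₁(x) = cos( (λ/α) x^α − Q(x) ) and y₂(x) = sin( (λ/α) x^α − Q(x) ) satisfies the differential equation D^α(D^α y)(x) + ( D^α p(x)/(λ − p(x)) ) · D^α y(x) + (λ − p(x))² y(x) = 0 for x ∈ (0,π), and their α-Wronskian y₁(x) D^α y₂(x) − y₂(x) D^α y₁(x) equals λ − p(x), which is nonzero; hence {y₁, y₂} is a fundamental system of solutions of this equation. -/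
/-!
The phase `φ x = (λ/α) x^α - Q x` has conformable derivative `w = λ - p`, and the conformable
derivative obeys the chain and product rules. Hence for `h = cos` or `h = sin` (any `h` with
`h'' = -h`) one gets `Dᵅ(h ∘ φ) = (h' ∘ φ) w` and `Dᵅ Dᵅ(h ∘ φ) = (h' ∘ φ) Dᵅw - w² (h ∘ φ)`, which is
the equation since `Dᵅw = -Dᵅp`; the Wronskian is `w (cos² φ + sin² φ) = w`.
-/

open Real MeasureTheory Set

/-- The conformable fractional derivative of order `α`: `Dᵅ f x = x^(1-α) * f' x`. -/
noncomputable def confDeriv (α : ℝ) (f : ℝ → ℝ) (x : ℝ) : ℝ :=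
  x ^ (1 - α) * deriv f x

section ConformableCalculus

variable {α x : ℝ} {f g φ : ℝ → ℝ}

theorem confDeriv_congr_of_eventuallyEq (hfg : f =ᶠ[nhds x] g) :
    confDeriv α f x = confDeriv α g x := by
  rw [confDeriv, confDeriv, hfg.deriv_eq]

theorem confDeriv_eq_of_hasDerivAt_mul_rpow {c : ℝ} (hx : 0 < x)
    (hf : HasDerivAt f (c * x ^ (α - 1)) x) : confDeriv α f x = c := by
  rw [confDeriv, hf.deriv, mul_left_comm, ← rpow_add hx]
  norm_num

theorem confDeriv_const_sub (c : ℝ) :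
    confDeriv α (fun z => c - f z) x = -confDeriv α f x := by
  rw [confDeriv, confDeriv, deriv_const_sub, mul_neg]

theorem confDeriv_mul (hf : DifferentiableAt ℝ f x) (hg : DifferentiableAt ℝ g x) :
    confDeriv α (fun z => f z * g z) x = confDeriv α f x * g x + f x * confDeriv α g x := by
  rw [confDeriv, confDeriv, confDeriv, deriv_fun_mul hf hg]
  ring

theorem confDeriv_comp {h : ℝ → ℝ} {h' : ℝ} (hh : HasDerivAt h h' (φ x))
    (hφ : DifferentiableAt ℝ φ x) : confDeriv α (h ∘ φ) x = h' * confDeriv α φ x := by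
  rw [confDeriv, confDeriv, (hh.comp x hφ.hasDerivAt).deriv]
  ring

end ConformableCalculus

theorem hasDerivAt_div_mul_rpow {α x : ℝ} (hα : α ≠ 0) (hx : 0 < x) (c : ℝ) :
    HasDerivAt (fun u => c / α * u ^ α) (c * x ^ (α - 1)) x :=
  ((hasDerivAt_rpow_const (Or.inl hx.ne')).const_mul (c / α)).congr_deriv (by field_simp)

theorem hasDerivAt_integral_rpow_mul {α b x : ℝ} {p : ℝ → ℝ} (hα : 0 < α)
    (hp : ContinuousOn p (Icc 0 b)) (hx : x ∈ Ioo 0 b) :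
    HasDerivAt (fun u => ∫ t in (0 : ℝ)..u, t ^ (α - 1) * p t) (x ^ (α - 1) * p x) x := by
  have hcont : ContinuousOn (fun t => t ^ (α - 1) * p t) (Ioo 0 b) :=
    (continuousOn_id.rpow_const fun t ht => Or.inl ht.1.ne').mul (hp.mono Ioo_subset_Icc_self)
  have hint : IntervalIntegrable (fun t => t ^ (α - 1) * p t) volume 0 x := by
    refine (intervalIntegral.intervalIntegrable_rpow' (by linarith)).mul_continuousOn
      (hp.mono ?_)
    rw [uIcc_of_le hx.1.le]
    exact Icc_subset_Icc_right hx.2.le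
  exact intervalIntegral.integral_hasDerivAt_right hint
    (hcont.stronglyMeasurableAtFilter isOpen_Ioo x hx) (hcont.continuousAt (isOpen_Ioo.mem_nhds hx))

section Oscillation

variable {α x : ℝ} {φ w : ℝ → ℝ}

theorem cos_mul_confDeriv_sin_comp_sub (hφ : DifferentiableAt ℝ φ x) :
    cos (φ x) * confDeriv α (sin ∘ φ) x - sin (φ x) * confDeriv α (cos ∘ φ) x
      = confDeriv α φ x := by
  rw [confDeriv_comp (hasDerivAt_sin _) hφ, confDeriv_comp (hasDerivAt_cos _) hφ]
  linear_combination confDeriv α φ x * cos_sq_add_sin_sq (φ x)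

variable {U : Set ℝ} {h h' : ℝ → ℝ}

theorem confDeriv_confDeriv_comp (hh : ∀ t, HasDerivAt h (h' t) t)
    (hh' : ∀ t, HasDerivAt h' (-h t) t) (hU : IsOpen U)
    (hφ : ∀ z ∈ U, DifferentiableAt ℝ φ z) (hDφ : ∀ z ∈ U, confDeriv α φ z = w z)
    (hx : x ∈ U) (hw : DifferentiableAt ℝ w x) :
    confDeriv α (confDeriv α (h ∘ φ)) x
      = h' (φ x) * confDeriv α w x - w x ^ 2 * (h ∘ φ) x := by
  have hfirst : confDeriv α (h ∘ φ) =ᶠ[nhds x] fun z => (h' ∘ φ) z * w z :=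
    Filter.eventually_of_mem (hU.mem_nhds hx) fun z hz => by
      rw [confDeriv_comp (hh _) (hφ z hz), hDφ z hz]
      rfl
  have hh'φ : DifferentiableAt ℝ (h' ∘ φ) x :=
    ((hh' (φ x)).differentiableAt).comp x (hφ x hx)
  rw [confDeriv_congr_of_eventuallyEq hfirst, confDeriv_mul hh'φ hw,
    confDeriv_comp (hh' _) (hφ x hx), hDφ x hx, Function.comp_apply, Function.comp_apply]
  ring

theorem confDeriv_confDeriv_comp_sub_add_eq_zero (hh : ∀ t, HasDerivAt h (h' t) t)
    (hh' : ∀ t, HasDerivAt h' (-h t) t) (hU : IsOpen U)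
    (hφ : ∀ z ∈ U, DifferentiableAt ℝ φ z) (hDφ : ∀ z ∈ U, confDeriv α φ z = w z)
    (hx : x ∈ U) (hw : DifferentiableAt ℝ w x) (hw0 : w x ≠ 0) :
    confDeriv α (confDeriv α (h ∘ φ)) x - confDeriv α w x / w x * confDeriv α (h ∘ φ) x
      + w x ^ 2 * (h ∘ φ) x = 0 := by
  rw [confDeriv_confDeriv_comp hh hh' hU hφ hDφ hx hw, confDeriv_comp (hh _) (hφ x hx), hDφ x hx]
  field_simp
  ring

end Oscillation

theorem fundamental_system_of_homogeneous_equation_general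
    (α : ℝ) (hα : α ∈ Set.Ioc (0 : ℝ) 1)
    (p p' : ℝ → ℝ)
    (hp : ∀ x ∈ Set.Icc 0 π, HasDerivAt p (p' x) x)
    (lam : ℝ) (hlam : ∀ x ∈ Set.Icc 0 π, lam ≠ p x)
    (Q : ℝ → ℝ) (hQ : ∀ x, Q x = ∫ t in (0:ℝ)..x, t ^ (α - 1) * p t)
    (y₁ y₂ : ℝ → ℝ)
    (hy₁ : y₁ = fun x : ℝ => Real.cos (lam / α * x ^ α - Q x))
    (hy₂ : y₂ = fun x : ℝ => Real.sin (lam / α * x ^ α - Q x)) :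
    ∀ x ∈ Set.Ioo 0 π,
      (confDeriv α (confDeriv α y₁) x
          + confDeriv α p x / (lam - p x) * confDeriv α y₁ x
          + (lam - p x) ^ 2 * y₁ x = 0)
      ∧ (confDeriv α (confDeriv α y₂) x
          + confDeriv α p x / (lam - p x) * confDeriv α y₂ x
          + (lam - p x) ^ 2 * y₂ x = 0)
      ∧ y₁ x * confDeriv α y₂ x - y₂ x * confDeriv α y₁ x = lam - p x
      ∧ lam - p x ≠ 0 := by
  set φ : ℝ → ℝ := fun u => lam / α * u ^ α - Q u
  have hpc : ContinuousOn p (Icc 0 π) := fun z hz => (hp z hz).continuousAt.continuousWithinAt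
  have hφ (z : ℝ) (hz : z ∈ Ioo 0 π) : HasDerivAt φ ((lam - p z) * z ^ (α - 1)) z := by
    have hQz := hasDerivAt_integral_rpow_mul hα.1 hpc hz
    rw [← funext hQ] at hQz
    exact ((hasDerivAt_div_mul_rpow hα.1.ne' hz.1 lam).sub hQz).congr_deriv (by ring)
  have hDφ (z : ℝ) (hz : z ∈ Ioo 0 π) : confDeriv α φ z = lam - p z :=
    confDeriv_eq_of_hasDerivAt_mul_rpow hz.1 (hφ z hz)
  intro x hx
  have hxI : x ∈ Icc 0 π := Ioo_subset_Icc_self hx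
  have hw0 : lam - p x ≠ 0 := sub_ne_zero.mpr (hlam x hxI)
  have hode := fun {h h' : ℝ → ℝ} (hh : ∀ t, HasDerivAt h (h' t) t)
      (hh' : ∀ t, HasDerivAt h' (-h t) t) =>
    confDeriv_confDeriv_comp_sub_add_eq_zero hh hh' isOpen_Ioo
      (fun z hz => (hφ z hz).differentiableAt) hDφ hx
      ((hp x hxI).const_sub lam).differentiableAt hw0
  have hcos := hode (h' := fun t => -sin t) hasDerivAt_cos fun t => (hasDerivAt_sin t).neg
  have hsin := hode hasDerivAt_sin hasDerivAt_cos
  rw [confDeriv_const_sub] at hcos hsin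
  obtain rfl : y₁ = cos ∘ φ := hy₁
  obtain rfl : y₂ = sin ∘ φ := hy₂
  refine ⟨by linear_combination hcos, by linear_combination hsin, ?_, hw0⟩
  rw [← hDφ x hx]
  exact cos_mul_confDeriv_sin_comp_sub (hφ x hx).differentiableAt

/-- **Fundamental system for the homogeneous conformable equation.**
Let `α ∈ (0,1]`, `p` be `C¹` on `[0,π]`, `Q x = ∫ t in 0..x, t^(α-1) p t`, and let `λ ∈ ℝ` with
`λ ≠ p x` on `[0,π]`.  Then `y₁ = cos((λ/α) x^α - Q x)` and `y₂ = sin((λ/α) x^α - Q x)` both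
satisfy `Dᵅ(Dᵅ y) + (Dᵅp/(λ-p)) Dᵅ y + (λ-p)² y = 0` on `(0,π)`, and their α-Wronskian
`y₁ Dᵅy₂ - y₂ Dᵅy₁` equals `λ - p x ≠ 0`; hence `{y₁, y₂}` is a fundamental system. -/
theorem fundamental_system_of_homogeneous_equation
    (α : ℝ) (hα : α ∈ Set.Ioc (0 : ℝ) 1)
    (p p' : ℝ → ℝ)
    (hp : ∀ x ∈ Set.Icc 0 π, HasDerivAt p (p' x) x)
    (hp' : ContinuousOn p' (Set.Icc 0 π))
    (lam : ℝ) (hlam : ∀ x ∈ Set.Icc 0 π, lam ≠ p x)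
    (Q : ℝ → ℝ) (hQ : ∀ x, Q x = ∫ t in (0:ℝ)..x, t ^ (α - 1) * p t)
    (y₁ y₂ : ℝ → ℝ)
    (hy₁ : y₁ = fun x : ℝ => Real.cos (lam / α * x ^ α - Q x))
    (hy₂ : y₂ = fun x : ℝ => Real.sin (lam / α * x ^ α - Q x)) :
    ∀ x ∈ Set.Ioo 0 π,
      (confDeriv α (confDeriv α y₁) x
          + confDeriv α p x / (lam - p x) * confDeriv α y₁ x
          + (lam - p x) ^ 2 * y₁ x = 0)
      ∧ (confDeriv α (confDeriv α y₂) x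
          + confDeriv α p x / (lam - p x) * confDeriv α y₂ x
          + (lam - p x) ^ 2 * y₂ x = 0)
      ∧ y₁ x * confDeriv α y₂ x - y₂ x * confDeriv α y₁ x = lam - p x
      ∧ lam - p x ≠ 0 :=
  fundamental_system_of_homogeneous_equation_general α hα p p' hp lam hlam Q hQ y₁ y₂ hy₁ hy₂
end

section
/- The set X of all nodal points of the eigenfunctions S(·,λ_n) (over all sufficiently large |n| and all admissible indices j) is dense in the interval [0,π]. -/
open Real MeasureTheory Set Filter Topology

/-- Admissible nodal indices: `1 ≤ j ≤ n-1` for `n > 0` and `n+1 ≤ j ≤ -1` for `n < 0`. -/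
def nodalAdmissible (n j : ℤ) : Prop :=
  (0 < n ∧ 1 ≤ j ∧ j ≤ n - 1) ∨ (n < 0 ∧ n + 1 ≤ j ∧ j ≤ -1)

/-! For large `l` the term `2 l p + q` is negligible against `l²`, so in the variable
`t = x^α/α` the solution `S l` oscillates at least as fast as `sin (ω t)` with `ω` of order `l`.
A Wronskian (Sturm comparison) argument then puts a zero of `S l` into every interval
`[a, b] ⊆ (0, π)` with `b^α/α - a^α/α ≥ π/ω`. As `λ_n → ∞`, every subinterval of `(0, π)`
contains a nodal point of `S(·, λ_n)` for large `n`. -/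

lemma monotoneOn_Icc_of_hasDerivAt_nonneg {f f' : ℝ → ℝ} {a b : ℝ}
    (hf : ∀ x ∈ Icc a b, HasDerivAt f (f' x) x) (hf' : ∀ x ∈ Ioo a b, 0 ≤ f' x) :
    MonotoneOn f (Icc a b) :=
  monotoneOn_of_hasDerivWithinAt_nonneg (convex_Icc a b)
    (fun x hx => (hf x hx).continuousAt.continuousWithinAt)
    (fun x hx => (hf x (interior_subset hx)).hasDerivWithinAt)
    (by rwa [interior_Icc])

section Sturm

variable {u F g ρ k : ℝ → ℝ} {a b ω : ℝ}

theorem not_forall_pos_of_sturm_comparison (hab : a ≤ b) (hω : 0 < ω)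
    (hu : ∀ x ∈ Icc a b, HasDerivAt u (ρ x * F x) x)
    (hF : ∀ x ∈ Icc a b, HasDerivAt F (-(k x * ρ x * u x)) x)
    (hg : ∀ x ∈ Icc a b, HasDerivAt g (ρ x) x)
    (hρ : ∀ x ∈ Icc a b, 0 ≤ ρ x) (hk : ∀ x ∈ Icc a b, ω ^ 2 ≤ k x)
    (hlen : π / ω ≤ g b - g a) :
    ¬ ∀ x ∈ Icc a b, 0 < u x := by
  intro hpos
  have hg_mono : MonotoneOn g (Icc a b) :=
    monotoneOn_Icc_of_hasDerivAt_nonneg hg fun x hx => hρ x (Ioo_subset_Icc_self hx)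
  obtain ⟨c, hc, hgc⟩ : ∃ c ∈ Icc a b, g c = g a + π / ω :=
    intermediate_value_Icc hab (fun x hx => (hg x hx).continuousAt.continuousWithinAt)
      ⟨by linarith [div_pos pi_pos hω], by linarith⟩
  have hsub : Icc a c ⊆ Icc a b := Icc_subset_Icc_right hc.2
  -- `W` is the Wronskian of `u` with the comparison solution `sin θ`: it is monotone on `[a, c]`
  -- but has the sign of `u a` at `a` and the opposite sign at `c`.
  set θ : ℝ → ℝ := fun x => ω * (g x - g a)
  set W : ℝ → ℝ := fun x => u x * (ω * cos (θ x)) - F x * sin (θ x)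
  have hθ_mem : ∀ x ∈ Icc a c, θ x ∈ Icc 0 π := fun x hx => by
    have h1 := hg_mono ⟨le_rfl, hab⟩ (hsub hx) hx.1
    have h2 := hg_mono (hsub hx) hc hx.2
    refine ⟨by simp only [θ]; nlinarith, ?_⟩
    have : ω * (g c - g a) = π := by rw [hgc]; field_simp; ring
    simp only [θ]; nlinarith
  have hW : ∀ x ∈ Icc a c,
      HasDerivAt W (ρ x * u x * sin (θ x) * (k x - ω ^ 2)) x := fun x hx => by
    have hθ : HasDerivAt θ (ω * ρ x) x := ((hg x (hsub hx)).sub_const (g a)).const_mul ω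
    have := ((hu x (hsub hx)).mul ((hθ.cos).const_mul ω)).sub
      ((hF x (hsub hx)).mul hθ.sin)
    exact this.congr_deriv (by ring)
  have hW_mono : MonotoneOn W (Icc a c) :=
    monotoneOn_Icc_of_hasDerivAt_nonneg hW fun x hx => by
      have hx' := Ioo_subset_Icc_self hx
      have := sin_nonneg_of_nonneg_of_le_pi (hθ_mem x hx').1 (hθ_mem x hx').2
      have := hρ x (hsub hx')
      have := (hpos x (hsub hx')).le
      have := sub_nonneg.2 (hk x (hsub hx'))
      positivity
  have hθa : θ a = 0 := by simp [θ]
  have hθc : θ c = π := by simp only [θ]; rw [hgc]; field_simp; ring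
  have := hW_mono ⟨le_rfl, hc.1⟩ ⟨hc.1, le_rfl⟩ hc.1
  simp only [W, hθa, hθc, cos_zero, sin_zero, cos_pi, sin_pi] at this
  nlinarith [hpos a ⟨le_rfl, hab⟩, hpos c hc]

theorem exists_zero_of_sturm_comparison (hab : a ≤ b) (hω : 0 < ω)
    (hu : ∀ x ∈ Icc a b, HasDerivAt u (ρ x * F x) x)
    (hF : ∀ x ∈ Icc a b, HasDerivAt F (-(k x * ρ x * u x)) x)
    (hg : ∀ x ∈ Icc a b, HasDerivAt g (ρ x) x)
    (hρ : ∀ x ∈ Icc a b, 0 ≤ ρ x) (hk : ∀ x ∈ Icc a b, ω ^ 2 ≤ k x)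
    (hlen : π / ω ≤ g b - g a) :
    ∃ x ∈ Icc a b, u x = 0 := by
  have ha : a ∈ Icc a b := ⟨le_rfl, hab⟩
  wlog hua : 0 < u a generalizing u F
  · rcases (not_lt.1 hua).eq_or_lt with h | h
    · exact ⟨a, ha, h⟩
    obtain ⟨x, hx, hx0⟩ := this (u := -u) (F := -F)
      (fun x hx => ((hu x hx).neg).congr_deriv (by simp))
      (fun x hx => ((hF x hx).neg).congr_deriv (by simp)) (by simpa using h)
    exact ⟨x, hx, neg_eq_zero.1 hx0⟩
  by_contra hne
  push Not at hne
  refine not_forall_pos_of_sturm_comparison hab hω hu hF hg hρ hk hlen fun x hx => ?_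
  by_contra hux
  obtain ⟨y, hy, hy0⟩ := isPreconnected_Icc.intermediate_value hx ha
    (fun x hx => (hu x hx).continuousAt.continuousWithinAt) ⟨not_lt.1 hux, hua.le⟩
  exact hne y hy hy0

end Sturm

lemma exists_Icc_subset_of_isOpen {U : Set ℝ} (hU : IsOpen U) (hne : U.Nonempty) :
    ∃ a b, a < b ∧ Icc a b ⊆ U := by
  obtain ⟨x, hx⟩ := hne
  obtain ⟨r, hr, hball⟩ := Metric.isOpen_iff.1 hU x hx
  refine ⟨x - r / 2, x + r / 2, by linarith, ?_⟩
  rw [← Real.closedBall_eq_Icc]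
  exact (Metric.closedBall_subset_ball (by linarith)).trans hball

lemma eventually_mul_add_le_sq (A B : ℝ) : ∀ᶠ l : ℝ in atTop, A * l + B ≤ l ^ 2 := by
  filter_upwards [eventually_ge_atTop (|A| + |B| + 1)] with l hl
  nlinarith [abs_nonneg A, abs_nonneg B, le_abs_self A, le_abs_self B]

lemma tendsto_atTop_of_abs_sub_mul_le {f : ℕ → ℝ} {c : ℝ} (hc : 0 < c)
    (hf : ∀ᶠ m in atTop, |f m - m * c| ≤ 1) : Tendsto f atTop atTop := by
  refine tendsto_atTop_mono' _ (hf.mono fun m hm => ?_)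
    (tendsto_atTop_add_const_right _ (-1) (tendsto_natCast_atTop_atTop.atTop_mul_const hc))
  linarith [(abs_le.1 hm).1]

section Conformable

variable {α : ℝ} {f : ℝ → ℝ} {x : ℝ}

lemma deriv_eq_rpow_mul_confDeriv (hx : 0 < x) : deriv f x = x ^ (α - 1) * confDeriv α f x := by
  rw [confDeriv, ← mul_assoc, ← rpow_add hx]
  simp

lemma DifferentiableAt.hasDerivAt_rpow_mul_confDeriv (hf : DifferentiableAt ℝ f x) (hx : 0 < x) :
    HasDerivAt f (x ^ (α - 1) * confDeriv α f x) x :=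
  deriv_eq_rpow_mul_confDeriv (f := f) hx ▸ hf.hasDerivAt

lemma hasDerivAt_confDeriv_of_eq {μ : ℝ} {V : ℝ → ℝ} (hf : DifferentiableAt ℝ (deriv f) x)
    (hx : 0 < x) (heq : -confDeriv α (confDeriv α f) x + V x * f x = μ * f x) :
    HasDerivAt (confDeriv α f) (-((μ - V x) * x ^ (α - 1) * f x)) x := by
  have hD : DifferentiableAt ℝ (confDeriv α f) x :=
    ((differentiableAt_id.rpow_const (Or.inl hx.ne')).mul hf :)
  refine hD.hasDerivAt.congr_deriv ?_
  rw [deriv_eq_rpow_mul_confDeriv hx]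
  linear_combination -x ^ (α - 1) * heq

end Conformable

theorem eventually_exists_zero_mem_Icc {α : ℝ} (hα : 0 < α) {p q : ℝ → ℝ}
    {S : ℝ → ℝ → ℝ} {U : Set ℝ} {a b : ℝ} (hU : IsOpen U) (ha : 0 < a) (hab : a < b)
    (habU : Icc a b ⊆ U) (hp : ContinuousOn p (Icc a b)) (hq : ContinuousOn q (Icc a b))
    (hS : ∀ l, ContDiffOn ℝ 2 (S l) U)
    (hSeq : ∀ l, ∀ x ∈ U,
      -confDeriv α (confDeriv α (S l)) x + (2 * l * p x + q x) * S l x = l ^ 2 * S l x) :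
    ∀ᶠ l in atTop, ∃ x ∈ Icc a b, S l x = 0 := by
  obtain ⟨P, hP⟩ := isCompact_Icc.exists_bound_of_continuousOn hp
  obtain ⟨Q, hQ⟩ := isCompact_Icc.exists_bound_of_continuousOn hq
  set L := b ^ α / α - a ^ α / α
  have hL : 0 < L := sub_pos.2 (div_lt_div_of_pos_right (rpow_lt_rpow ha.le hab hα) hα)
  have hω : 0 < π / L := div_pos pi_pos hL
  have hx0 : ∀ x ∈ Icc a b, 0 < x := fun x hx => ha.trans_le hx.1
  have hg : ∀ x ∈ Icc a b, HasDerivAt (fun y => y ^ α / α) (x ^ (α - 1)) x := fun x hx =>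
    ((hasDerivAt_rpow_const (Or.inl (hx0 x hx).ne')).div_const α).congr_deriv (by field_simp)
  filter_upwards [eventually_ge_atTop 0, eventually_mul_add_le_sq (2 * P) (Q + (π / L) ^ 2)]
    with l hl0 hl
  have hu : ∀ x ∈ Icc a b, HasDerivAt (S l) (x ^ (α - 1) * confDeriv α (S l) x) x :=
    fun x hx => (((hS l).differentiableOn (by norm_num)).differentiableAt
      (hU.mem_nhds (habU hx))).hasDerivAt_rpow_mul_confDeriv (hx0 x hx)
  have hF : ∀ x ∈ Icc a b, HasDerivAt (confDeriv α (S l))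
      (-((l ^ 2 - (2 * l * p x + q x)) * x ^ (α - 1) * S l x)) x := fun x hx =>
    hasDerivAt_confDeriv_of_eq (V := fun y => 2 * l * p y + q y)
      ((((hS l).deriv_of_isOpen hU (by norm_num)).differentiableOn one_ne_zero).differentiableAt
        (hU.mem_nhds (habU hx))) (hx0 x hx) (hSeq l x (habU hx))
  have hk : ∀ x ∈ Icc a b, (π / L) ^ 2 ≤ l ^ 2 - (2 * l * p x + q x) := fun x hx => by
    nlinarith [abs_le.1 (hP x hx), abs_le.1 (hQ x hx)]
  refine exists_zero_of_sturm_comparison hab.le hω hu hF hg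
    (fun x hx => rpow_nonneg (hx0 x hx).le _) hk ?_
  rw [div_div_cancel₀ pi_pos.ne']

theorem nodal_set_dense_general
    (α : ℝ) (hα : α ∈ Set.Ioc (0 : ℝ) 1)
    (p p' q : ℝ → ℝ)
    (hp : ∀ x ∈ Set.Icc 0 π, HasDerivAt p (p' x) x)
    (hq : ContinuousOn q (Set.Icc 0 π))
    (S : ℝ → ℝ → ℝ)
    (hSsmooth : ∀ l : ℝ, ContDiffOn ℝ 2 (S l) (Set.Ioo 0 π))
    (hSeq : ∀ l : ℝ, ∀ x ∈ Set.Ioo 0 π,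
      -(confDeriv α (confDeriv α (S l)) x) + (2 * l * p x + q x) * S l x = l ^ 2 * S l x)
    (lam : ℤ → ℝ) (N₀ : ℕ)
    (hloc : ∀ n : ℤ, n ≠ 0 → N₀ ≤ n.natAbs → |lam n - n * α / π ^ (α - 1)| ≤ 1)
    (X : ℤ → ℤ → ℝ)
    (hXall : ∀ n : ℤ, n ≠ 0 → N₀ ≤ n.natAbs → ∀ x ∈ Set.Ioo (0:ℝ) π,
      S (lam n) x = 0 → ∃ j : ℤ, nodalAdmissible n j ∧ X n j = x) :
    Set.Icc (0:ℝ) π ⊆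
      closure {x : ℝ | ∃ n j : ℤ, n ≠ 0 ∧ N₀ ≤ n.natAbs ∧ nodalAdmissible n j ∧ X n j = x} := by
  intro x₀ hx₀
  rw [← closure_Ioo pi_pos.ne] at hx₀
  refine mem_closure_iff.2 fun o ho hx₀o => ?_
  obtain ⟨a, b, hab, habU⟩ := exists_Icc_subset_of_isOpen (ho.inter isOpen_Ioo)
    (mem_closure_iff.1 hx₀ o ho hx₀o)
  have hIcc : Icc a b ⊆ Icc 0 π := fun x hx => Ioo_subset_Icc_self (habU hx).2
  have hpc : ContinuousOn p (Icc 0 π) := fun x hx => (hp x hx).continuousAt.continuousWithinAt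
  have hzero := eventually_exists_zero_mem_Icc hα.1 isOpen_Ioo (habU ⟨le_rfl, hab.le⟩).2.1 hab
    (fun x hx => (habU hx).2) (hpc.mono hIcc) (hq.mono hIcc) hSsmooth hSeq
  have hlam : Tendsto (fun m : ℕ => lam m) atTop atTop := by
    refine tendsto_atTop_of_abs_sub_mul_le (div_pos hα.1 (rpow_pos_of_pos pi_pos (α - 1))) ?_
    filter_upwards [eventually_ge_atTop (N₀ + 1)] with m hm
    simpa [mul_div_assoc] using hloc m (by omega) (by simp; omega)
  obtain ⟨m, ⟨z, hz, hz0⟩, hm⟩ :=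
    ((hlam.eventually hzero).and (eventually_ge_atTop (N₀ + 1))).exists
  have hm0 : (m : ℤ) ≠ 0 := by omega
  have hmN : N₀ ≤ (m : ℤ).natAbs := by simp; omega
  obtain ⟨j, hj, hXj⟩ := hXall m hm0 hmN z (habU hz).2 hz0
  exact ⟨z, (habU hz).1, m, j, hm0, hmN, hj, hXj⟩

/-- **Density of the nodal set (Corollary 2).**
The set `X` of all nodal points `x_n^j` (over all sufficiently large `|n|` and admissible `j`)
is dense in `[0,π]`. -/
theorem nodal_set_dense
    (α : ℝ) (hα : α ∈ Set.Ioc (0 : ℝ) 1)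
    (p p' q : ℝ → ℝ)
    (hp : ∀ x ∈ Set.Icc 0 π, HasDerivAt p (p' x) x)
    (hp' : ContinuousOn p' (Set.Icc 0 π))
    (hq : ContinuousOn q (Set.Icc 0 π))
    (hpnc : ¬ ∃ c : ℝ, ∀ x ∈ Set.Icc 0 π, p x = c)
    (hpint : (∫ t in (0:ℝ)..π, t ^ (α - 1) * p t) = 0)
    (S : ℝ → ℝ → ℝ)
    (hSsmooth : ∀ l : ℝ, ContDiffOn ℝ 2 (S l) (Set.Ioo 0 π))
    (hScont : ∀ l : ℝ, ContinuousOn (S l) (Set.Icc 0 π))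
    (hSeq : ∀ l : ℝ, ∀ x ∈ Set.Ioo 0 π,
      -(confDeriv α (confDeriv α (S l)) x) + (2 * l * p x + q x) * S l x = l ^ 2 * S l x)
    (hS0 : ∀ l : ℝ, S l 0 = 0)
    (hS0' : ∀ l : ℝ, Tendsto (confDeriv α (S l)) (𝓝[>] (0:ℝ)) (𝓝 1))
    (lam : ℤ → ℝ) (N₀ : ℕ)
    (hzero : ∀ n : ℤ, n ≠ 0 → N₀ ≤ n.natAbs → S (lam n) π = 0)
    (hloc : ∀ n : ℤ, n ≠ 0 → N₀ ≤ n.natAbs → |lam n - n * α / π ^ (α - 1)| ≤ 1)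
    (X : ℤ → ℤ → ℝ)
    (hXnode : ∀ n : ℤ, n ≠ 0 → N₀ ≤ n.natAbs → ∀ j : ℤ, nodalAdmissible n j →
      X n j ∈ Set.Ioo (0:ℝ) π ∧ S (lam n) (X n j) = 0)
    (hXall : ∀ n : ℤ, n ≠ 0 → N₀ ≤ n.natAbs → ∀ x ∈ Set.Ioo (0:ℝ) π,
      S (lam n) x = 0 → ∃ j : ℤ, nodalAdmissible n j ∧ X n j = x) :
    Set.Icc (0:ℝ) π ⊆
      closure {x : ℝ | ∃ n j : ℤ, n ≠ 0 ∧ N₀ ≤ n.natAbs ∧ nodalAdmissible n j ∧ X n j = x} :=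
  nodal_set_dense_general α hα p p' q hp hq S hSsmooth hSeq lam N₀ hloc X hXall
end
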